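/- Let u be a measurable function on a measure space with 0 ≤ u ≤ M := ess sup u < ∞, supported on E₀ = {u > 0} with |E₀| < ∞, and suppose |E_t| = |E₀| for a.e. t ∈ (0, M), where E_t = {u > t}. Then u = M·χ_{E₀} almost everywhere; if moreover ∫ u = 1, then M = 1/|E₀| and u = χ_{E₀}/|E₀| a.e. -/

import Mathlib

/-!
Every good level `t` (one with `|E_t| = |E₀|`) makes the slab `{0 < u ≤ t}` null, since it is
`E₀ \ E_t` and `|E₀| < ∞`. Good levels are co-null in `(0, M)`, so they accumulate at `M`, and
`{0 < u < M}` is a countable union of such slabs. Hence `u ∈ {0, M}` a.e., i.e.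
`u = M·χ_{E₀}`, and integrating gives `M·|E₀| = 1`.
-/

open MeasureTheory Filter Set Topology

section

variable {α : Type*} [MeasurableSpace α] {μ : Measure α} {u : α → ℝ}

theorem measure_setOf_lt_and_le_eq_zero (hu : Measurable u) {s t : ℝ} (hst : s ≤ t)
    (hfin : μ {x | s < u x} ≠ ⊤) (heq : μ {x | t < u x} = μ {x | s < u x}) :
    μ {x | s < u x ∧ u x ≤ t} = 0 := by
  have hsub : {x | t < u x} ⊆ {x | s < u x} := fun x hx => hst.trans_lt hx
  have hdiff : {x | s < u x} \ {x | t < u x} = {x | s < u x ∧ u x ≤ t} := by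
    ext x
    simp only [Set.mem_sdiff, mem_ofPred_eq, not_lt]
  rw [← hdiff, measure_sdiff hsub (measurableSet_lt measurable_const hu).nullMeasurableSet
    (ne_top_of_le_ne_top hfin (measure_mono hsub)), heq, tsub_self]

theorem exists_seq_tendsto_right_of_ae_restrict_Ioo {P : ℝ → Prop} {a b : ℝ} (hab : a < b)
    (h : ∀ᵐ t ∂volume.restrict (Ioo a b), P t) :
    ∃ t : ℕ → ℝ, (∀ n, t n ∈ Ioo a b ∧ P (t n)) ∧ Tendsto t atTop (𝓝 b) := by
  have hexists (n : ℕ) : ∃ t ∈ Ioo (max a (b - 1 / (n + 1))) b, P t := by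
    have hlt : max a (b - 1 / (n + 1)) < b :=
      max_lt hab (sub_lt_self b Nat.one_div_pos_of_nat)
    have : NeBot (ae (volume.restrict (Ioo (max a (b - 1 / (n + 1))) b))) :=
      ae_restrict_neBot.2 (by simpa using hlt)
    exact ((ae_restrict_mem measurableSet_Ioo).and
      (ae_restrict_of_ae_restrict_of_subset (Ioo_subset_Ioo_left (le_max_left _ _)) h)).exists
  choose t ht hP using hexists
  refine ⟨t, fun n => ⟨⟨(le_max_left _ _).trans_lt (ht n).1, (ht n).2⟩, hP n⟩, ?_⟩
  have hlow : Tendsto (fun n : ℕ => b - 1 / ((n : ℝ) + 1)) atTop (𝓝 b) := by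
    simpa using tendsto_const_nhds.sub (tendsto_one_div_add_atTop_nhds_zero_nat (𝕜 := ℝ))
  exact tendsto_of_tendsto_of_tendsto_of_le_of_le hlow tendsto_const_nhds
    (fun n => ((le_max_right _ _).trans_lt (ht n).1).le) (fun n => (ht n).2.le)

theorem ae_eq_of_pos_of_measure_superlevel_eq (hu : Measurable u) {M : ℝ}
    (hub : ∀ᵐ x ∂μ, u x ≤ M) (hE0 : μ {x | 0 < u x} ≠ ⊤)
    (hlevel : ∀ᵐ t ∂volume.restrict (Ioo 0 M), μ {x | t < u x} = μ {x | 0 < u x}) :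
    ∀ᵐ x ∂μ, 0 < u x → u x = M := by
  rcases le_or_gt M 0 with hM | hM
  · filter_upwards [hub] with x hx hpos
    linarith
  obtain ⟨t, ht, htM⟩ := exists_seq_tendsto_right_of_ae_restrict_Ioo hM hlevel
  have hslab (n : ℕ) : μ {x | 0 < u x ∧ u x ≤ t n} = 0 :=
    measure_setOf_lt_and_le_eq_zero hu (ht n).1.1.le hE0 (ht n).2
  have hcover : {x | 0 < u x ∧ u x < M} ⊆ ⋃ n, {x | 0 < u x ∧ u x ≤ t n} := fun x hx =>
    have ⟨n, hn⟩ := (htM.eventually (lt_mem_nhds hx.2)).exists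
    mem_iUnion.2 ⟨n, hx.1, hn.le⟩
  have hnull : ∀ᵐ x ∂μ, x ∉ {x | 0 < u x ∧ u x < M} :=
    measure_eq_zero_iff_ae_notMem.1 (measure_mono_null hcover (measure_iUnion_null hslab))
  filter_upwards [hub, hnull] with x hle hx hpos
  exact hle.antisymm (not_lt.1 fun hlt => hx ⟨hpos, hlt⟩)

end

theorem stmt18_general {α : Type*} [MeasurableSpace α] (μ : Measure α)
    (u : α → ℝ) (hu_meas : Measurable u)
    (hnn : ∀ᵐ x ∂μ, 0 ≤ u x)
    (M : ℝ)
    (hub : ∀ᵐ x ∂μ, u x ≤ M)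
    (hE0 : μ {x | 0 < u x} < ⊤)
    (hlevel : ∀ᵐ t ∂(volume.restrict (Set.Ioo (0:ℝ) M)),
      μ {x | t < u x} = μ {x | 0 < u x}) :
    (∀ᵐ x ∂μ, u x = M * Set.indicator {x | 0 < u x} (fun _ => (1:ℝ)) x) ∧
      ((Integrable u μ ∧ ∫ x, u x ∂μ = 1) →
        M = 1 / (μ {x | 0 < u x}).toReal ∧
          ∀ᵐ x ∂μ, u x =
            Set.indicator {x | 0 < u x} (fun _ => 1 / (μ {x | 0 < u x}).toReal) x) := by
  have hmain : ∀ᵐ x ∂μ, u x = M * {x | 0 < u x}.indicator (fun _ => (1:ℝ)) x := by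
    filter_upwards [hnn, ae_eq_of_pos_of_measure_superlevel_eq hu_meas hub hE0.ne hlevel]
      with x hnonneg hpos_eq
    rcases hnonneg.lt_or_eq with hpos | hzero
    · rw [indicator_of_mem (show x ∈ {x | 0 < u x} from hpos), mul_one, hpos_eq hpos]
    · simp [← hzero]
  refine ⟨hmain, fun ⟨_, hint⟩ => ?_⟩
  have hMval : M = 1 / (μ {x | 0 < u x}).toReal := by
    refine eq_one_div_of_mul_eq_one_left ?_
    rw [← hint, integral_congr_ae hmain, integral_const_mul,
      integral_indicator_const _ (measurableSet_lt measurable_const hu_meas), smul_eq_mul,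
      mul_one, Measure.real]
  refine ⟨hMval, ?_⟩
  filter_upwards [hmain] with x hx
  rw [hx, hMval, ← indicator_const_mul, mul_one]

/-- If `0 ≤ u ≤ M = ess sup u`, `E₀ = {u > 0}` has finite measure and
`|E_t| = |E₀|` for a.e. `t ∈ (0, M)`, then `u = M·χ_{E₀}` a.e.; if moreover
`∫u = 1`, then `M = 1/|E₀|` and `u = χ_{E₀}/|E₀|` a.e. -/
theorem stmt18 {α : Type*} [MeasurableSpace α] (μ : Measure α)
    (u : α → ℝ) (hu_meas : Measurable u)
    (hnn : ∀ᵐ x ∂μ, 0 ≤ u x)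
    (M : ℝ) (hM : M = essSup u μ)
    (hub : ∀ᵐ x ∂μ, u x ≤ M)
    (hE0 : μ {x | 0 < u x} < ⊤)
    (hlevel : ∀ᵐ t ∂(volume.restrict (Set.Ioo (0:ℝ) M)),
      μ {x | t < u x} = μ {x | 0 < u x}) :
    (∀ᵐ x ∂μ, u x = M * Set.indicator {x | 0 < u x} (fun _ => (1:ℝ)) x) ∧
      ((Integrable u μ ∧ ∫ x, u x ∂μ = 1) →
        M = 1 / (μ {x | 0 < u x}).toReal ∧
          ∀ᵐ x ∂μ, u x =
            Set.indicator {x | 0 < u x} (fun _ => 1 / (μ {x | 0 < u x}).toReal) x) :=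
  stmt18_general μ u hu_meas hnn M hub hE0 hlevel
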